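/- Let 𝒩 be a nest on a separable complex Hilbert space H, let Q ∈ 𝒩 with Q ≠ {0} and Q_- = Q, and let a ∈ Alg 𝒩 and ε > 0 satisfy ‖Q P^⊥ a Q P^⊥‖ ≥ 2ε for all P ∈ 𝒩 with P < Q. Let (R_n) be a strictly increasing sequence in 𝒩 with R_n < Q for all n that converges to Q in the strong operator topology, and fix j ∈ ℕ. Then there exist m > j and a unit vector f ∈ R_m with f orthogonal to R_j such that ‖R_m R_j^⊥ a R_m R_j^⊥ f‖ ≥ ε. -/

import Mathlib

open scoped InnerProductSpace

set_option synthInstance.maxHeartbeats 1000000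
set_option maxHeartbeats 1000000

/-- A nest on a complex Hilbert space `H`: a family of closed subspaces, totally ordered by
inclusion, containing `{0}` and `H`, closed under intersections and closed linear spans. -/
structure Nest (H : Type*) [NormedAddCommGroup H] [InnerProductSpace ℂ H]
    [CompleteSpace H] where
  carrier : Set (Submodule ℂ H)
  isClosed : ∀ N ∈ carrier, IsClosed (N : Set H)
  total : ∀ N ∈ carrier, ∀ M ∈ carrier, N ≤ M ∨ M ≤ N
  bot_mem : ⊥ ∈ carrier
  top_mem : ⊤ ∈ carrier
  sInf_mem : ∀ S ⊆ carrier, S.Nonempty → sInf S ∈ carrier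
  closedSpan_mem : ∀ S ⊆ carrier, S.Nonempty → (sSup S).topologicalClosure ∈ carrier

variable {H : Type*} [NormedAddCommGroup H] [InnerProductSpace ℂ H] [CompleteSpace H]

/-- The orthogonal projection onto a closed subspace, as an operator `H →L[ℂ] H`. -/
noncomputable def subProj (N : Submodule ℂ H) (hN : IsClosed (N : Set H)) : H →L[ℂ] H :=
  haveI : CompleteSpace N := hN.completeSpace_coe
  N.subtypeL ∘L N.orthogonalProjectionOnto

/-- The orthogonal projection onto an element of a nest. -/
noncomputable def Nest.proj (𝒩 : Nest H) (N : Submodule ℂ H) (hN : N ∈ 𝒩.carrier) :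
    H →L[ℂ] H :=
  subProj N (𝒩.isClosed N hN)

/-- The nest algebra of all bounded operators leaving every element of the nest invariant. -/
def nestAlgebra (𝒩 : Nest H) : Subalgebra ℂ (H →L[ℂ] H) where
  carrier := {T | ∀ N ∈ 𝒩.carrier, ∀ x ∈ N, T x ∈ N}
  mul_mem' := fun hT hS N hN x hx => hT N hN _ (hS N hN x hx)
  one_mem' := fun N _ x hx => hx
  add_mem' := fun hT hS N hN x hx => N.add_mem (hT N hN x hx) (hS N hN x hx)
  algebraMap_mem' := fun r N _ x hx => by
    simpa [Algebra.algebraMap_eq_smul_one] using N.smul_mem r hx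

/-- `Q₋`: the closed span of the elements of the nest strictly below `Q`. -/
def Nest.pred (𝒩 : Nest H) (Q : Submodule ℂ H) : Submodule ℂ H :=
  (sSup {P | P ∈ 𝒩.carrier ∧ P < Q}).topologicalClosure

/-- `Q₊`: the intersection of the elements of the nest strictly above `Q`. -/
def Nest.succ (𝒩 : Nest H) (Q : Submodule ℂ H) : Submodule ℂ H :=
  sInf {P | P ∈ 𝒩.carrier ∧ Q < P}

/-- The projection onto `Q₋`. -/
noncomputable def Nest.predProj (𝒩 : Nest H) (Q : Submodule ℂ H) : H →L[ℂ] H :=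
  subProj (𝒩.pred Q) (Submodule.isClosed_topologicalClosure _)

/-- The rank one operator `e ⊗ f : h ↦ ⟨h, e⟩ f` (inner product linear in `h`). -/
noncomputable def rankOne (e f : H) : H →L[ℂ] H :=
  (ContinuousLinearMap.toSpanSingleton ℂ f).comp (innerSL ℂ e)

/-- The Jacobson radical of the nest algebra, viewed as a set of operators on `H`. -/
def nestRadical (𝒩 : Nest H) : Set (H →L[ℂ] H) :=
  (fun a : nestAlgebra 𝒩 => (a : H →L[ℂ] H)) ''
    {a | a ∈ (⊥ : TwoSidedIdeal (nestAlgebra 𝒩)).jacobson}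

/-- `K(𝒩)`: the compact operators belonging to the nest algebra. -/
def nestCompacts (𝒩 : Nest H) : Set (H →L[ℂ] H) :=
  {T | T ∈ nestAlgebra 𝒩 ∧ IsCompactOperator T}

/-- `K(𝒩) + Rad(Alg 𝒩)` as a set of operators. -/
def nestKplusRad (𝒩 : Nest H) : Set (H →L[ℂ] H) :=
  {T | ∃ k ∈ nestCompacts 𝒩, ∃ r ∈ nestRadical 𝒩, T = k + r}


/-! Since `‖E a E‖ ≥ 2ε > ε` for `E = Q R_jᗮ`, some `x` in the unit ball has `‖E a E x‖ > ε`.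
The compressions `E_m = R_m R_jᗮ` are contractions converging strongly to `E`, so
`E_m a E_m x → E a E x` and `‖E_m a E_m x‖ > ε` for some `m > j`. For `m ≥ j`, `E_m` is the
projection onto `R_m ⊖ R_j`, hence `E_m a E_m (E_m x) = E_m a E_m x` with `‖E_m x‖ ≤ 1`, and
normalising `E_m x` gives `f`. -/

open Filter Topology

section StrongConvergence

variable {𝕜 E F ι : Type*} [NontriviallyNormedField 𝕜] [SeminormedAddCommGroup E]
  [NormedSpace 𝕜 E] [SeminormedAddCommGroup F] [NormedSpace 𝕜 F] {l : Filter ι}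

theorem tendsto_apply_of_tendsto_of_opNorm_le {A : ι → E →L[𝕜] F} {A₀ : E →L[𝕜] F} {C : ℝ}
    (hA : ∀ z, Tendsto (fun i => A i z) l (𝓝 (A₀ z))) (hC : ∀ i, ‖A i‖ ≤ C)
    {v : ι → E} {v₀ : E} (hv : Tendsto v l (𝓝 v₀)) :
    Tendsto (fun i => A i (v i)) l (𝓝 (A₀ v₀)) := by
  have hdiff : Tendsto (fun i => A i (v i) - A i v₀) l (𝓝 0) := by
    rw [tendsto_zero_iff_norm_tendsto_zero]
    refine squeeze_zero (fun _ => norm_nonneg _) (fun i => ?_)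
      (by simpa using ((tendsto_iff_norm_sub_tendsto_zero.1 hv).const_mul C))
    rw [← map_sub]
    exact (A i).le_of_opNorm_le (hC i) _
  simpa using hdiff.add (hA v₀)

theorem tendsto_mul_mul_apply_of_tendsto_of_opNorm_le {A : ι → E →L[𝕜] E}
    {A₀ : E →L[𝕜] E} {C : ℝ} (hA : ∀ z, Tendsto (fun i => A i z) l (𝓝 (A₀ z)))
    (hC : ∀ i, ‖A i‖ ≤ C) (b : E →L[𝕜] E) (x : E) :
    Tendsto (fun i => (A i * b * A i) x) l (𝓝 ((A₀ * b * A₀) x)) :=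
  tendsto_apply_of_tendsto_of_opNorm_le hA hC ((b.continuous.tendsto _).comp (hA x))

end StrongConvergence

theorem exists_norm_eq_one_mem_le_norm_apply {𝕜 E F : Type*} [RCLike 𝕜]
    [NormedAddCommGroup E] [NormedSpace 𝕜 E] [SeminormedAddCommGroup F] [NormedSpace 𝕜 F]
    {K : Submodule 𝕜 E} {T : E →L[𝕜] F} {π : E →L[𝕜] E} (hπK : ∀ z, π z ∈ K)
    (hπ : ‖π‖ ≤ 1) (hTπ : T ∘L π = T) {x : E} (hx : ‖x‖ ≤ 1) {ε : ℝ} (hε : 0 ≤ ε)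
    (hTx : ε < ‖T x‖) : ∃ f ∈ K, ‖f‖ = 1 ∧ ε ≤ ‖T f‖ := by
  set y := π x
  have hTy : T y = T x := congrArg (· x) hTπ
  have hy : ‖y‖ ≤ 1 := (π.le_of_opNorm_le hπ x).trans (by simpa using hx)
  have hy0 : y ≠ 0 := by
    rintro hy0
    rw [← hTy, hy0, map_zero, norm_zero] at hTx
    linarith
  refine ⟨(‖y‖⁻¹ : 𝕜) • y, K.smul_mem _ (hπK x), norm_smul_inv_norm hy0, ?_⟩
  calc ε ≤ ‖T x‖ := hTx.le
    _ ≤ ‖y‖⁻¹ * ‖T x‖ := le_mul_of_one_le_left (norm_nonneg _)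
        (one_le_inv₀ (norm_pos_iff.2 hy0) |>.2 hy)
    _ = ‖T ((‖y‖⁻¹ : 𝕜) • y)‖ := by
        rw [map_smul, hTy, norm_smul, norm_inv, RCLike.norm_ofReal, abs_norm]

section subProj

variable {N P : Submodule ℂ H} (hN : IsClosed (N : Set H)) (hP : IsClosed (P : Set H))

theorem subProj_eq_starProjection [N.HasOrthogonalProjection] :
    subProj N hN = N.starProjection :=
  rfl

theorem norm_subProj_mul_one_sub_le : ‖subProj N hN * (1 - subProj P hP)‖ ≤ 1 := by
  have := hN.completeSpace_coe
  have := hP.completeSpace_coe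
  rw [subProj_eq_starProjection, subProj_eq_starProjection, ← P.starProjection_orthogonal']
  exact (norm_mul_le _ _).trans
    (mul_le_one₀ N.starProjection_norm_le (norm_nonneg _) Pᗮ.starProjection_norm_le)

variable {hN hP}

theorem subProj_mul_one_sub_apply_mem (hPN : P ≤ N) (z : H) :
    (subProj N hN * (1 - subProj P hP)) z ∈ N ⊓ Pᗮ := by
  have := hN.completeSpace_coe
  have := hP.completeSpace_coe
  rw [subProj_eq_starProjection, subProj_eq_starProjection, ← P.starProjection_orthogonal']
  set w := Pᗮ.starProjection z
  refine ⟨N.starProjection_apply_mem w, ?_⟩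
  have hw : w - (w - N.starProjection w) ∈ Pᗮ :=
    Pᗮ.sub_mem (Pᗮ.starProjection_apply_mem z)
      (Submodule.orthogonal_le hPN (N.sub_starProjection_mem_orthogonal w))
  rwa [sub_sub_cancel] at hw

theorem subProj_mul_one_sub_apply_of_mem {y : H} (hy : y ∈ N ⊓ Pᗮ) :
    (subProj N hN * (1 - subProj P hP)) y = y := by
  have := hN.completeSpace_coe
  have := hP.completeSpace_coe
  rw [subProj_eq_starProjection, subProj_eq_starProjection, ← P.starProjection_orthogonal']
  change N.starProjection (Pᗮ.starProjection y) = y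
  rw [Submodule.starProjection_eq_self_iff.2 hy.2, Submodule.starProjection_eq_self_iff.2 hy.1]

theorem isIdempotentElem_subProj_mul_one_sub (hPN : P ≤ N) :
    IsIdempotentElem (subProj N hN * (1 - subProj P hP)) :=
  ContinuousLinearMap.ext fun z =>
    subProj_mul_one_sub_apply_of_mem (hN := hN) (hP := hP) (subProj_mul_one_sub_apply_mem hPN z)

end subProj

theorem nest_cont_step_general (𝒩 : Nest H)
    (Q : Submodule ℂ H) (hQ : Q ∈ 𝒩.carrier)
    (a : H →L[ℂ] H) (ε : ℝ) (hε : 0 < ε)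
    (hna : ∀ P, ∀ hP : P ∈ 𝒩.carrier, P < Q →
      2 * ε ≤ ‖(𝒩.proj Q hQ * (1 - 𝒩.proj P hP)) * a * (𝒩.proj Q hQ * (1 - 𝒩.proj P hP))‖)
    (R : ℕ → Submodule ℂ H) (hR : ∀ n, R n ∈ 𝒩.carrier)
    (hmono : StrictMono R) (hRQ : ∀ n, R n < Q)
    (hsot : ∀ h : H, Filter.Tendsto (fun n => 𝒩.proj (R n) (hR n) h) Filter.atTop
      (nhds (𝒩.proj Q hQ h)))
    (j : ℕ) :
    ∃ m, j < m ∧ ∃ f : H, f ∈ R m ∧ ‖f‖ = 1 ∧ (∀ g ∈ R j, ⟪g, f⟫_ℂ = 0) ∧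
      ε ≤ ‖((𝒩.proj (R m) (hR m) * (1 - 𝒩.proj (R j) (hR j))) * a *
          (𝒩.proj (R m) (hR m) * (1 - 𝒩.proj (R j) (hR j)))) f‖ := by
  obtain ⟨x, hx, hεx⟩ := ContinuousLinearMap.exists_lt_apply_of_lt_opNorm _
    ((lt_two_mul_self hε).trans_le (hna _ (hR j) (hRQ j)))
  have hE_tendsto := tendsto_mul_mul_apply_of_tendsto_of_opNorm_le
    (A := fun m => 𝒩.proj (R m) (hR m) * (1 - 𝒩.proj (R j) (hR j)))
    (A₀ := 𝒩.proj Q hQ * (1 - 𝒩.proj (R j) (hR j))) (fun z => hsot _)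
    (fun m => norm_subProj_mul_one_sub_le _ _) a x
  obtain ⟨m, hjm, hεm⟩ := ((eventually_gt_atTop j).and
    (hE_tendsto.norm.eventually (lt_mem_nhds hεx))).exists
  have hRjm : R j ≤ R m := hmono.monotone hjm.le
  obtain ⟨f, hf, hf1, hεf⟩ := exists_norm_eq_one_mem_le_norm_apply
    (subProj_mul_one_sub_apply_mem hRjm) (norm_subProj_mul_one_sub_le _ _)
    ((mul_assoc _ _ _).trans (congrArg (_ * ·) (isIdempotentElem_subProj_mul_one_sub hRjm).eq))
    hx.le hε.le hεm
  exact ⟨m, hjm, f, hf.1, hf1, fun g hg => Submodule.inner_right_of_mem_orthogonal hg hf.2, hεf⟩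

/-- The one-step selection in the proof of Lemma `cont`: given `R_j` one can find `m > j` and a
unit vector `f ∈ R_m ⊖ R_j` with `‖R_m R_j^⊥ a R_m R_j^⊥ f‖ ≥ ε`. -/
theorem nest_cont_step [TopologicalSpace.SeparableSpace H] (𝒩 : Nest H)
    (Q : Submodule ℂ H) (hQ : Q ∈ 𝒩.carrier) (hQbot : Q ≠ ⊥) (hQpred : 𝒩.pred Q = Q)
    (a : H →L[ℂ] H) (ha : a ∈ nestAlgebra 𝒩) (ε : ℝ) (hε : 0 < ε)
    (hna : ∀ P, ∀ hP : P ∈ 𝒩.carrier, P < Q →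
      2 * ε ≤ ‖(𝒩.proj Q hQ * (1 - 𝒩.proj P hP)) * a * (𝒩.proj Q hQ * (1 - 𝒩.proj P hP))‖)
    (R : ℕ → Submodule ℂ H) (hR : ∀ n, R n ∈ 𝒩.carrier)
    (hmono : StrictMono R) (hRQ : ∀ n, R n < Q)
    (hsot : ∀ h : H, Filter.Tendsto (fun n => 𝒩.proj (R n) (hR n) h) Filter.atTop
      (nhds (𝒩.proj Q hQ h)))
    (j : ℕ) :
    ∃ m, j < m ∧ ∃ f : H, f ∈ R m ∧ ‖f‖ = 1 ∧ (∀ g ∈ R j, ⟪g, f⟫_ℂ = 0) ∧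
      ε ≤ ‖((𝒩.proj (R m) (hR m) * (1 - 𝒩.proj (R j) (hR j))) * a *
          (𝒩.proj (R m) (hR m) * (1 - 𝒩.proj (R j) (hR j)))) f‖ :=
  nest_cont_step_general 𝒩 Q hQ a ε hε hna R hR hmono hRQ hsot j
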